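/- Let G be a finite group and suppose f : G → {0,1} can be computed by a coset decision tree with m leaves. Then ‖f‖_{A(G)} ≤ m·2^m. -/

import Mathlib

open scoped BigOperators Pointwise Classical ComplexOrder

noncomputable def convMatrix {G : Type*} [Group G] [Fintype G] (f : G → ℂ) :
    Matrix G G ℂ := fun x y => f (x * y⁻¹) / (Fintype.card G)

/-- The algebra norm `‖f‖_{A(G)}`: sum of singular values of `g ↦ f ∗ g`. -/
noncomputable def algNorm {G : Type*} [Group G] [Fintype G] [DecidableEq G]
    (f : G → ℂ) : ℝ :=
  (let hA := (Matrix.posSemidef_conjTranspose_mul_self (convMatrix f)).1;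
    ((hA.eigenvectorUnitary : Matrix G G ℂ) *
      Matrix.diagonal (fun i => ((Real.sqrt (hA.eigenvalues i) : ℝ) : ℂ)) *
      (star hA.eigenvectorUnitary : Matrix G G ℂ))).trace.re

/-- Binary decision trees over subsets of `G`: a leaf holds an output bit; an
internal node holds a query set `W` with a subtree for `x ∈ W` and one for
`x ∉ W`. -/
inductive DTree (G : Type*) where
  | leaf : Bool → DTree G
  | node : Set G → DTree G → DTree G → DTree G

namespace DTree

noncomputable def eval {G : Type*} : DTree G → G → Bool
  | leaf b, _ => b
  | node W t1 t0, x => if x ∈ W then t1.eval x else t0.eval x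

def leaves {G : Type*} : DTree G → ℕ
  | leaf _ => 1
  | node _ t1 t0 => t1.leaves + t0.leaves

/-- A coset decision tree: every query set is a (left) coset of a subgroup. -/
def IsCosetTree {G : Type*} [Group G] : DTree G → Prop
  | leaf _ => True
  | node W t1 t0 =>
      (∃ (g : G) (H : Subgroup G), W = g • (H : Set G)) ∧
        IsCosetTree t1 ∧ IsCosetTree t0

end DTree

/-!
`algNorm f` is the trace norm of the convolution matrix `M_f = (f (x y⁻¹) / |G|)_{x,y}`. If
`A = ∑ᵢ xᵢ yᵢᴴ`, the trace norm of `A` is `∑ⱼ ‖A vⱼ‖` for an orthonormal eigenbasis `(vⱼ)` of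
`AᴴA`; the vectors `A vⱼ` are pairwise orthogonal, so Cauchy–Schwarz and Bessel's inequality
bound it by `∑ᵢ ‖xᵢ‖ ‖yᵢ‖`. For a coset `gH`, `M_{1_{gH}} = (|G| |H|)⁻¹ ∑_z 1_{gHz} 1_{Hz}ᴴ`,
a decomposition of cost `1`.

Cosets together with `∅` are closed under intersection, and at a node querying `W`,
`1_C f_T = 1_{C∩W} f_{T₁} + 1_C f_{T₀} - 1_{C∩W} f_{T₀}`. Induction over the tree, for all such
contexts `C` at once, gives decompositions of cost `c(T)` with `c(leaf) = 1` and
`c(T) = c(T₁) + 2 c(T₀)`, which `m 2^m` dominates.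
-/

open scoped InnerProductSpace

universe u v

section InnerProductSpace
variable {𝕜 E F : Type*} [RCLike 𝕜] [NormedAddCommGroup E] [InnerProductSpace 𝕜 E]
  [NormedAddCommGroup F] [InnerProductSpace 𝕜 F]

theorem Orthonormal.sum_norm_inner_mul_norm_inner_le {ι : Type*} [Fintype ι] {u : ι → F}
    {v : ι → E} (hu : Orthonormal 𝕜 u) (hv : Orthonormal 𝕜 v) (x : F) (y : E) :
    ∑ j, ‖⟪u j, x⟫_𝕜‖ * ‖⟪y, v j⟫_𝕜‖ ≤ ‖x‖ * ‖y‖ :=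
  calc ∑ j, ‖⟪u j, x⟫_𝕜‖ * ‖⟪y, v j⟫_𝕜‖
      ≤ √(∑ j, ‖⟪u j, x⟫_𝕜‖ ^ 2) * √(∑ j, ‖⟪v j, y⟫_𝕜‖ ^ 2) := by
        simpa only [norm_inner_symm y] using Real.sum_mul_le_sqrt_mul_sqrt _ _ _
    _ ≤ √(‖x‖ ^ 2) * √(‖y‖ ^ 2) := by
        gcongr
        exacts [hu.sum_inner_products_le x, hv.sum_inner_products_le y]
    _ = ‖x‖ * ‖y‖ := by rw [Real.sqrt_sq (norm_nonneg x), Real.sqrt_sq (norm_nonneg y)]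

theorem Orthonormal.sum_norm_apply_le {ι κ : Type*} [Fintype ι] [Fintype κ] {v : κ → E}
    (hv : Orthonormal 𝕜 v) (T : E → F) (x : ι → F) (y : ι → E)
    (hT : ∀ z, T z = ∑ i, ⟪y i, z⟫_𝕜 • x i)
    (horth : Pairwise fun j k => ⟪T (v j), T (v k)⟫_𝕜 = 0) :
    ∑ j, ‖T (v j)‖ ≤ ∑ i, ‖x i‖ * ‖y i‖ := by
  let u : {j // T (v j) ≠ 0} → F := fun j => (‖T (v j)‖⁻¹ : 𝕜) • T (v j)
  have hu : Orthonormal 𝕜 u := by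
    refine ⟨fun j => norm_smul_inv_norm j.2, fun j k hjk => ?_⟩
    simp only [u, inner_smul_left, inner_smul_right, horth (Subtype.coe_ne_coe.mpr hjk), mul_zero]
  have hnorm (j : {j // T (v j) ≠ 0}) :
      ‖T (v j)‖ ≤ ∑ i, ‖⟪u j, x i⟫_𝕜‖ * ‖⟪y i, v j⟫_𝕜‖ :=
    calc ‖T (v j)‖ = ‖⟪u j, T (v j)⟫_𝕜‖ := by
          rw [inner_smul_left, inner_self_eq_norm_sq_to_K, norm_mul, norm_pow]
          simp [sq, j.2]
      _ ≤ ∑ i, ‖⟪u j, x i⟫_𝕜‖ * ‖⟪y i, v j⟫_𝕜‖ := by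
          rw [hT, inner_sum]
          refine (norm_sum_le _ _).trans_eq (Finset.sum_congr rfl fun i _ => ?_)
          rw [inner_smul_right, norm_mul, mul_comm]
  calc ∑ j, ‖T (v j)‖ = ∑ j : {j // T (v j) ≠ 0}, ‖T (v j)‖ := by
        rw [← Finset.sum_filter_of_ne fun j _ hj => norm_ne_zero_iff.mp hj]
        exact Finset.sum_subtype _ (by simp) _
    _ ≤ ∑ j : {j // T (v j) ≠ 0}, ∑ i, ‖⟪u j, x i⟫_𝕜‖ * ‖⟪y i, v j⟫_𝕜‖ :=
        Finset.sum_le_sum fun j _ => hnorm j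
    _ = ∑ i, ∑ j : {j // T (v j) ≠ 0}, ‖⟪u j, x i⟫_𝕜‖ * ‖⟪y i, v j⟫_𝕜‖ := Finset.sum_comm
    _ ≤ ∑ i, ‖x i‖ * ‖y i‖ := Finset.sum_le_sum fun i _ =>
        hu.sum_norm_inner_mul_norm_inner_le (hv.comp _ Subtype.val_injective) _ _

end InnerProductSpace

namespace Matrix
variable {𝕜 : Type*} [RCLike 𝕜] {m : Type u} {n : Type v} [Fintype m] [Fintype n]

section TraceNorm
variable [DecidableEq n]

noncomputable def traceNorm (A : Matrix m n 𝕜) : ℝ :=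
  ∑ i, √((isHermitian_conjTranspose_mul_self A).eigenvalues i)

theorem inner_toEuclideanLin_eigenvectorBasis (A : Matrix m n 𝕜)
    (hA : (Aᴴ * A).IsHermitian) (j k : n) :
    ⟪toEuclideanLin A (hA.eigenvectorBasis j), toEuclideanLin A (hA.eigenvectorBasis k)⟫_𝕜 =
      hA.eigenvalues k * ⟪hA.eigenvectorBasis j, hA.eigenvectorBasis k⟫_𝕜 := by
  have hv : toEuclideanLin Aᴴ (toEuclideanLin A (hA.eigenvectorBasis k)) =
      (hA.eigenvalues k : 𝕜) • hA.eigenvectorBasis k := by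
    apply WithLp.ofLp_injective
    simp [ofLp_toLpLin, mulVec_mulVec, hA.mulVec_eigenvectorBasis]
  rw [← LinearMap.adjoint_inner_right, ← toEuclideanLin_conjTranspose_eq_adjoint, hv,
    inner_smul_right]

theorem traceNorm_eq_sum_norm_toEuclideanLin (A : Matrix m n 𝕜) :
    A.traceNorm = ∑ j, ‖toEuclideanLin A
      ((isHermitian_conjTranspose_mul_self A).eigenvectorBasis j)‖ := by
  refine Finset.sum_congr rfl fun j _ => ?_
  have h := inner_toEuclideanLin_eigenvectorBasis A (isHermitian_conjTranspose_mul_self A) j j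
  rw [inner_self_eq_norm_sq_to_K, inner_self_eq_norm_sq_to_K, OrthonormalBasis.norm_eq_one,
    RCLike.ofReal_one, one_pow, mul_one] at h
  rw [← Real.sqrt_sq (norm_nonneg _)]
  congr 1
  exact_mod_cast h.symm

theorem traceNorm_le_of_eq_sum_vecMulVec {ι : Type*} [Fintype ι] {A : Matrix m n 𝕜}
    (x : ι → EuclideanSpace 𝕜 m) (y : ι → EuclideanSpace 𝕜 n)
    (hA : A = ∑ i, vecMulVec (x i) (star (y i))) :
    A.traceNorm ≤ ∑ i, ‖x i‖ * ‖y i‖ := by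
  set hAA := isHermitian_conjTranspose_mul_self A
  rw [traceNorm_eq_sum_norm_toEuclideanLin]
  refine hAA.eigenvectorBasis.orthonormal.sum_norm_apply_le _ x y (fun z => ?_)
    fun j k hjk => ?_
  · subst hA
    ext a
    simp [vecMulVec_mulVec, EuclideanSpace.inner_eq_star_dotProduct, dotProduct_comm (star _)]
  · dsimp only
    rw [inner_toEuclideanLin_eigenvectorBasis, hAA.eigenvectorBasis.orthonormal.inner_eq_zero hjk,
      mul_zero]

end TraceNorm

variable {A B : Matrix m n 𝕜} {c d : ℝ}

def HasRankOneDecomp (A : Matrix m n 𝕜) (c : ℝ) : Prop :=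
  ∃ (ι : Type (max u v)) (_ : Fintype ι) (x : ι → EuclideanSpace 𝕜 m)
    (y : ι → EuclideanSpace 𝕜 n),
    A = ∑ i, vecMulVec (x i) (star (y i)) ∧ ∑ i, ‖x i‖ * ‖y i‖ ≤ c

theorem hasRankOneDecomp_zero : (0 : Matrix m n 𝕜).HasRankOneDecomp 0 :=
  ⟨PEmpty, inferInstance, PEmpty.elim, PEmpty.elim, by simp, by simp⟩

namespace HasRankOneDecomp

theorem traceNorm_le [DecidableEq n] (h : A.HasRankOneDecomp c) : A.traceNorm ≤ c := by
  obtain ⟨ι, _, x, y, hA, hc⟩ := h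
  exact (traceNorm_le_of_eq_sum_vecMulVec x y hA).trans hc

theorem mono (h : A.HasRankOneDecomp c) (hcd : c ≤ d) : A.HasRankOneDecomp d := by
  obtain ⟨ι, _, x, y, hA, hc⟩ := h
  exact ⟨ι, _, x, y, hA, hc.trans hcd⟩

theorem add (hA : A.HasRankOneDecomp c) (hB : B.HasRankOneDecomp d) :
    (A + B).HasRankOneDecomp (c + d) := by
  obtain ⟨ι, _, x, y, rfl, hc⟩ := hA
  obtain ⟨κ, _, x', y', rfl, hd⟩ := hB
  refine ⟨ι ⊕ κ, inferInstance, Sum.elim x x', Sum.elim y y', by simp, ?_⟩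
  simpa using add_le_add hc hd

theorem neg (h : A.HasRankOneDecomp c) : (-A).HasRankOneDecomp c := by
  obtain ⟨ι, _, x, y, rfl, hc⟩ := h
  exact ⟨ι, _, -x, y, by simp, by simpa using hc⟩

theorem sub (hA : A.HasRankOneDecomp c) (hB : B.HasRankOneDecomp d) :
    (A - B).HasRankOneDecomp (c + d) := by
  simpa only [sub_eq_add_neg] using hA.add hB.neg

end HasRankOneDecomp

end Matrix

section Convolution
variable {G : Type*} [Group G] [Fintype G]

theorem algNorm_eq_traceNorm [DecidableEq G] (f : G → ℂ) :
    algNorm f = (convMatrix f).traceNorm := by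
  simp only [algNorm, Matrix.traceNorm]
  rw [Matrix.trace_mul_cycle, Unitary.coe_star_mul_self, one_mul, Matrix.trace_diagonal,
    Complex.re_sum]
  simp


theorem convMatrix_zero : convMatrix (0 : G → ℂ) = 0 := by
  ext x y
  simp [convMatrix]

theorem convMatrix_add (f f' : G → ℂ) : convMatrix (f + f') = convMatrix f + convMatrix f' := by
  ext x y
  simp [convMatrix, add_div]

theorem convMatrix_sub (f f' : G → ℂ) : convMatrix (f - f') = convMatrix f - convMatrix f' := by
  ext x y
  simp [convMatrix, sub_div]

theorem sum_indicator_subgroup {M : Type*} [AddCommMonoid M] (H : Subgroup G) (k : M) :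
    ∑ h, (H : Set G).indicator (fun _ => k) h = Nat.card H • k := by
  simp [Set.indicator_apply, Finset.sum_ite, Nat.card_eq_fintype_card, Fintype.card_subtype]

theorem sum_indicator_coset_mul_inv {M : Type*} [AddCommMonoid M] (g z : G) (H : Subgroup G)
    (k : M) : ∑ a, (g • (H : Set G)).indicator (fun _ => k) (a * z⁻¹) = Nat.card H • k :=
  calc ∑ a, (g • (H : Set G)).indicator (fun _ => k) (a * z⁻¹)
      = ∑ a, (g • (H : Set G)).indicator (fun _ => k) a := Equiv.sum_comp (Equiv.mulRight z⁻¹) _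
    _ = ∑ h, (g • (H : Set G)).indicator (fun _ => k) (g * h) :=
      (Equiv.sum_comp (Equiv.mulLeft g) _).symm
    _ = Nat.card H • k := by
      simpa [Set.indicator_apply, mem_leftCoset_iff] using sum_indicator_subgroup H k

theorem norm_toLp_indicator_coset_mul_inv (g z : G) (H : Subgroup G) :
    ‖WithLp.toLp 2 fun a => (g • (H : Set G)).indicator (fun _ => (1 : ℂ)) (a * z⁻¹)‖ =
      √(Nat.card H) := by
  rw [EuclideanSpace.norm_eq]
  congr 1
  simpa [Set.indicator_apply, apply_ite] using sum_indicator_coset_mul_inv g z H (1 : ℝ)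

theorem sum_indicator_coset_mul_inv_mul_indicator (g a b : G) (H : Subgroup G) :
    ∑ z, (g • (H : Set G)).indicator (fun _ => (1 : ℂ)) (a * z⁻¹) *
        (H : Set G).indicator (fun _ => 1) (b * z⁻¹) =
      Nat.card H • (g • (H : Set G)).indicator (fun _ => 1) (a * b⁻¹) :=
  calc _ = ∑ h, (g • (H : Set G)).indicator (fun _ => (1 : ℂ)) (a * (h * b)⁻¹) *
          (H : Set G).indicator (fun _ => 1) (b * (h * b)⁻¹) :=
        (Equiv.sum_comp (Equiv.mulRight b) _).symm
    _ = ∑ h, (H : Set G).indicator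
          (fun _ => (g • (H : Set G)).indicator (fun _ => 1) (a * b⁻¹)) h := by
        refine Finset.sum_congr rfl fun h _ => ?_
        by_cases hh : h ∈ H
        · have hmem : a * b⁻¹ * h⁻¹ ∈ g • (H : Set G) ↔ a * b⁻¹ ∈ g • (H : Set G) := by
            simp only [mem_leftCoset_iff, SetLike.mem_coe, ← mul_assoc,
              mul_mem_cancel_right (inv_mem hh)]
          simp [hh, Set.indicator_apply, hmem, ← mul_assoc]
        · simp [hh]
    _ = _ := sum_indicator_subgroup H _

theorem hasRankOneDecomp_convMatrix_indicator_coset (g : G) (H : Subgroup G) :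
    (convMatrix ((g • (H : Set G)).indicator fun _ => 1)).HasRankOneDecomp 1 := by
  set κ : ℂ := ((Fintype.card G * Nat.card H : ℕ) : ℂ)⁻¹
  let x : G → EuclideanSpace ℂ G := fun z =>
    κ • WithLp.toLp 2 fun a => (g • (H : Set G)).indicator (fun _ => 1) (a * z⁻¹)
  let y : G → EuclideanSpace ℂ G := fun z =>
    WithLp.toLp 2 fun b => (H : Set G).indicator (fun _ => 1) (b * z⁻¹)
  refine ⟨G, inferInstance, x, y, ?_, ?_⟩
  · ext a b
    have hconj (z : G) : star ((H : Set G).indicator (fun _ => (1 : ℂ)) (b * z⁻¹)) =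
        (H : Set G).indicator (fun _ => 1) (b * z⁻¹) := by
      simp [Set.indicator_apply, apply_ite]
    simp only [convMatrix, x, y, Matrix.sum_apply, Matrix.vecMulVec_apply, PiLp.smul_apply,
      Pi.star_apply, hconj, smul_eq_mul, mul_assoc, ← Finset.mul_sum,
      sum_indicator_coset_mul_inv_mul_indicator, nsmul_eq_mul, κ]
    have : (Nat.card H : ℂ) ≠ 0 := Nat.cast_ne_zero.mpr Nat.card_pos.ne'
    field_simp
    push_cast
    ring
  · have hy (z : G) : ‖y z‖ = √(Nat.card H) := by
      simpa using norm_toLp_indicator_coset_mul_inv 1 z H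
    have hH : (0 : ℝ) < Nat.card H := Nat.cast_pos.mpr Nat.card_pos
    simp only [x, hy, norm_smul, norm_toLp_indicator_coset_mul_inv, mul_assoc,
      Real.mul_self_sqrt hH.le, Finset.sum_const, Finset.card_univ, nsmul_eq_mul, κ, norm_inv,
      Complex.norm_natCast]
    push_cast
    field_simp
    rfl

end Convolution

theorem DTree.one_le_leaves {G : Type*} (T : DTree G) : 1 ≤ T.leaves := by
  induction T with
  | leaf => rfl
  | node _ t1 t0 _ _ => simp only [DTree.leaves]; omega

theorem mul_two_pow_add_le {a : ℕ} (ha : 1 ≤ a) (b : ℕ) :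
    a * 2 ^ a + (b * 2 ^ b + b * 2 ^ b) ≤ (a + b) * 2 ^ (a + b) := by
  have h2a : 2 ≤ 2 ^ a := Nat.le_self_pow (by omega) 2
  calc a * 2 ^ a + (b * 2 ^ b + b * 2 ^ b)
      ≤ a * 2 ^ a * 2 ^ b + b * 2 ^ b * 2 ^ a := by
        rw [← two_mul, mul_comm 2]
        exact add_le_add (Nat.le_mul_of_pos_right _ (by positivity)) (Nat.mul_le_mul_left _ h2a)
    _ = (a + b) * 2 ^ (a + b) := by ring

theorem DTree.indicator_eval_node {G : Type*} (C W : Set G) (t1 t0 : DTree G) :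
    (C.indicator fun x => if (DTree.node W t1 t0).eval x then (1 : ℂ) else 0) =
      (C ∩ W).indicator (fun x => if t1.eval x then 1 else 0) +
        (C.indicator (fun x => if t0.eval x then 1 else 0) -
          (C ∩ W).indicator (fun x => if t0.eval x then 1 else 0)) := by
  ext x
  by_cases hx : x ∈ W <;> by_cases hxC : x ∈ C <;> simp [DTree.eval, hx, hxC]

section CosetTree
variable {G : Type*} [Group G]

def IsCosetOrEmpty (W : Set G) : Prop :=
  W = ∅ ∨ ∃ (g : G) (H : Subgroup G), W = g • (H : Set G)

theorem IsCosetOrEmpty.inter_coset {C : Set G} (hC : IsCosetOrEmpty C) (g : G)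
    (H : Subgroup G) : IsCosetOrEmpty (C ∩ g • (H : Set G)) := by
  obtain hempty | ⟨c, hcC, hcW⟩ := (C ∩ g • (H : Set G)).eq_empty_or_nonempty
  · exact Or.inl hempty
  obtain rfl | ⟨g', K, rfl⟩ := hC
  · exact absurd hcC (Set.notMem_empty c)
  have hK : g' • (K : Set G) = c • (K : Set G) :=
    (leftCoset_eq_iff K).mpr ((mem_leftCoset_iff g').mp hcC)
  have hH : g • (H : Set G) = c • (H : Set G) :=
    (leftCoset_eq_iff H).mpr ((mem_leftCoset_iff g).mp hcW)
  exact Or.inr ⟨c, K ⊓ H, by rw [hK, hH, ← Set.smul_set_inter, Subgroup.coe_inf]⟩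

variable [Fintype G]

theorem IsCosetOrEmpty.hasRankOneDecomp_convMatrix_indicator {C : Set G}
    (hC : IsCosetOrEmpty C) : (convMatrix (C.indicator fun _ => 1)).HasRankOneDecomp 1 := by
  obtain rfl | ⟨g, H, rfl⟩ := hC
  · rw [Set.indicator_empty, ← Pi.zero_def, convMatrix_zero]
    exact Matrix.hasRankOneDecomp_zero.mono zero_le_one
  · exact hasRankOneDecomp_convMatrix_indicator_coset g H

theorem DTree.hasRankOneDecomp_convMatrix_indicator_eval {T : DTree G} (hT : T.IsCosetTree)
    {C : Set G} (hC : IsCosetOrEmpty C) :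
    (convMatrix (C.indicator fun x => if T.eval x then 1 else 0)).HasRankOneDecomp
      (T.leaves * 2 ^ T.leaves) := by
  induction T generalizing C with
  | leaf b =>
    cases b
    · simp only [DTree.eval, Bool.false_eq_true, if_false, Set.indicator_zero', ← Pi.zero_def,
        convMatrix_zero]
      exact Matrix.hasRankOneDecomp_zero.mono (by positivity)
    · simpa [DTree.eval] using
        hC.hasRankOneDecomp_convMatrix_indicator.mono (by norm_num [DTree.leaves])
  | node W t1 t0 ih1 ih0 =>
    obtain ⟨⟨g, H, rfl⟩, h1, h0⟩ := hT
    have hC' := hC.inter_coset g H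
    rw [DTree.indicator_eval_node, convMatrix_add, convMatrix_sub]
    refine ((ih1 h1 hC').add ((ih0 h0 hC).sub (ih0 h0 hC'))).mono ?_
    simp only [DTree.leaves]
    exact_mod_cast mul_two_pow_add_le t1.one_le_leaves t0.leaves

end CosetTree

/-- A Boolean function computed by a coset decision tree with `m` leaves has
algebra norm at most `m·2^m`. -/
theorem algNorm_le_of_cosetTree {G : Type*} [Group G] [Fintype G] [DecidableEq G]
    (f : G → ℂ) (T : DTree G) (hT : T.IsCosetTree)
    (hf : ∀ x, f x = if T.eval x then 1 else 0) :
    algNorm f ≤ T.leaves * 2 ^ T.leaves := by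
  have hC : IsCosetOrEmpty (Set.univ : Set G) := Or.inr ⟨1, ⊤, by simp⟩
  have hfC : f = Set.univ.indicator fun x => if T.eval x then 1 else 0 := by
    rw [Set.indicator_univ]
    exact funext hf
  rw [algNorm_eq_traceNorm, hfC]
  exact (DTree.hasRankOneDecomp_convMatrix_indicator_eval hT hC).traceNorm_le
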